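/- arXiv:2109.03757 — 2 statements merged into one kernel-verified Lean document; each statement's English description precedes it below -/
import Mathlib

section
/- (Balancing property of overlap weights.) Let Z ∈ {0,1}, X a covariate, and e(X) = P(Z = 1 | X) with 0 < e(X) < 1 almost surely. Then for every bounded measurable function h: E[ Z·(1 − e(X)) · h(X) ] = E[ (1−Z)·e(X) · h(X) ] = E[ e(X)(1 − e(X)) · h(X) ]. In particular, the overlap-weighted covariate distributions of the two arms are identical. -/
/-!
Since `e(X)` is a version of `E[Z | X]`, the tower property and the pull-out property give
`E[φ Z] = E[φ e(X)]` for every bounded `σ(X)`-measurable `φ`. Taking `φ = (1 - e(X)) h(X)` turns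
the treated integral into `E[e(1 - e) h]`; the same argument for `1 - Z`, whose conditional
expectation is `1 - e(X)`, with `φ = e(X) h(X)` does the same for the control integral.
-/

open MeasureTheory

section

variable {Ω : Type*} {m mΩ : MeasurableSpace Ω} {μ : Measure Ω} [IsFiniteMeasure μ]

theorem integral_mul_eq_integral_mul_of_ae_eq_condExp (hm : m ≤ mΩ) {Y g φ : Ω → ℝ}
    (hY : Integrable Y μ) (hg : g =ᵐ[μ] μ[Y | m]) (hφ : AEStronglyMeasurable[m] φ μ) {C : ℝ}
    (hφC : ∀ ω, |φ ω| ≤ C) :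
    ∫ ω, φ ω * Y ω ∂μ = ∫ ω, φ ω * g ω ∂μ := by
  have hφY : Integrable (φ * Y) μ := hY.bdd_mul (hφ.mono hm) (.of_forall hφC)
  calc ∫ ω, φ ω * Y ω ∂μ = ∫ ω, μ[φ * Y | m] ω ∂μ := (integral_condExp hm).symm
    _ = ∫ ω, φ ω * g ω ∂μ := integral_congr_ae <|
      (condExp_mul_of_aestronglyMeasurable_left hφ hφY hY).trans
        (Filter.EventuallyEq.rfl.mul hg.symm)

theorem one_sub_ae_eq_condExp_one_sub (hm : m ≤ mΩ) {Y g : Ω → ℝ} (hY : Integrable Y μ)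
    (hg : g =ᵐ[μ] μ[Y | m]) :
    (fun ω => 1 - g ω) =ᵐ[μ] μ[fun ω => 1 - Y ω | m] := by
  filter_upwards [hg, condExp_sub (integrable_const (1 : ℝ)) hY m] with ω hgω hsub
  rw [condExp_const hm, Pi.sub_apply] at hsub
  rw [hgω]
  exact hsub.symm

end

/-- Balancing property of overlap weights: for every bounded measurable `h`,
`E[Z(1-e(X)) h(X)] = E[(1-Z) e(X) h(X)] = E[e(X)(1-e(X)) h(X)]`. -/
theorem stmt_8 {Ω 𝓧 : Type*} [mΩ : MeasurableSpace Ω] [m𝓧 : MeasurableSpace 𝓧]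
    (μ : Measure Ω) [IsProbabilityMeasure μ]
    (X : Ω → 𝓧) (hX : Measurable X)
    (Z : Ω → ℝ) (hZ : Measurable Z) (hZbin : ∀ ω, Z ω = 0 ∨ Z ω = 1)
    (e : 𝓧 → ℝ)
    (he : (fun ω => e (X ω)) =ᵐ[μ] μ[Z | m𝓧.comap X])
    (hpos : ∀ x, 0 < e x ∧ e x < 1) :
    ∀ h : 𝓧 → ℝ, Measurable h → (∃ C, ∀ x, |h x| ≤ C) →
      (∫ ω, Z ω * (1 - e (X ω)) * h (X ω) ∂μ)
        = (∫ ω, (1 - Z ω) * e (X ω) * h (X ω) ∂μ) ∧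
      (∫ ω, (1 - Z ω) * e (X ω) * h (X ω) ∂μ)
        = ∫ ω, e (X ω) * (1 - e (X ω)) * h (X ω) ∂μ := by
  rintro h hh ⟨C, hC⟩
  have hm : m𝓧.comap X ≤ mΩ := hX.comap_le
  have hZint : Integrable Z μ := .of_bound hZ.aestronglyMeasurable 1 (.of_forall fun ω => by
    rcases hZbin ω with hz | hz <;> simp [hz])
  have heX : AEStronglyMeasurable[m𝓧.comap X] (fun ω => e (X ω)) μ :=
    stronglyMeasurable_condExp.aestronglyMeasurable.congr he.symm
  have hhX : AEStronglyMeasurable[m𝓧.comap X] (fun ω => h (X ω)) μ :=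
    (hh.comp (comap_measurable X)).aestronglyMeasurable
  have bound {a : ℝ} (ha : |a| ≤ 1) (x : 𝓧) : |a * h x| ≤ C := by
    rw [abs_mul]; exact (mul_le_of_le_one_left (abs_nonneg _) ha).trans (hC x)
  have treated := integral_mul_eq_integral_mul_of_ae_eq_condExp hm hZint he
    (φ := fun ω => (1 - e (X ω)) * h (X ω)) ((aestronglyMeasurable_const.sub heX).mul hhX)
    fun ω => bound (abs_le.2 ⟨by linarith [hpos (X ω)], by linarith [hpos (X ω)]⟩) (X ω)
  have control := integral_mul_eq_integral_mul_of_ae_eq_condExp hm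
    ((integrable_const 1).sub hZint) (one_sub_ae_eq_condExp_one_sub hm hZint he)
    (φ := fun ω => e (X ω) * h (X ω)) (heX.mul hhX)
    fun ω => bound (abs_le.2 ⟨by linarith [hpos (X ω)], by linarith [hpos (X ω)]⟩) (X ω)
  simp only [mul_comm, mul_assoc, mul_left_comm] at treated control ⊢
  exact ⟨treated.trans control.symm, control⟩
end

section
/- (Population QTE from the PS-regression mixture.) Suppose the conditional quantile of Y given the propensity score e(X) = t and treatment Z = z is F⁻¹(τ | t, z) = β₀(τ) + β₁ z + β₃ t, where τ ↦ β₀(τ) is continuous and strictly increasing from (0,1) onto ℝ. Let T = e(X) be a random variable with 0 < T < 1, and define F_j(y) = E[ F(y | T, j) ] for j = 0, 1, where F(· | t, z) is the inverse of τ ↦ β₀(τ) + β₁ z + β₃ t. Then F₁(y) = F₀(y − β₁) for all y, and hence F₁⁻¹(τ) − F₀⁻¹(τ) = β₁ for every τ ∈ (0,1). -/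
open MeasureTheory

/-- Generalized inverse (quantile function) `F⁻¹(τ) = inf {y : F y ≥ τ}`. -/
noncomputable def Qinv (F : ℝ → ℝ) (τ : ℝ) : ℝ := sInf {y : ℝ | τ ≤ F y}

/-- Proposition 2: in the PS-regression quantile model without treatment–PS interaction,
`F⁻¹(τ|t,z) = β₀(τ) + β₁ z + β₃ t`, the mixture CDFs over the PS distribution satisfy
`F₁(y) = F₀(y - β₁)`, hence the population QTE equals `β₁` at every `τ`. -/
theorem stmt_13 {Ω : Type*} [MeasurableSpace Ω]
    (μ : Measure Ω) [IsProbabilityMeasure μ]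
    (T : Ω → ℝ) (hTmeas : Measurable T) (hT : ∀ ω, T ω ∈ Set.Ioo (0:ℝ) 1)
    (β₀ : ℝ → ℝ) (β₁ β₃ : ℝ)
    (hβ₀c : ContinuousOn β₀ (Set.Ioo 0 1)) (hβ₀m : StrictMonoOn β₀ (Set.Ioo 0 1))
    (hβ₀onto : β₀ '' Set.Ioo 0 1 = Set.univ)
    (F : ℝ → ℝ → ℝ → ℝ)  -- F y t z : conditional CDF at y given PS = t, treatment z
    (hFinv : ∀ τ ∈ Set.Ioo (0:ℝ) 1, ∀ t z : ℝ, F (β₀ τ + β₁ * z + β₃ * t) t z = τ)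
    (hFrange : ∀ y t z, F y t z ∈ Set.Ioo (0:ℝ) 1)
    (hFint : ∀ y z, Integrable (fun ω => F y (T ω) z) μ)
    (F₀ F₁ : ℝ → ℝ)
    (hF₀ : ∀ y, F₀ y = ∫ ω, F y (T ω) 0 ∂μ)
    (hF₁ : ∀ y, F₁ y = ∫ ω, F y (T ω) 1 ∂μ) :
    (∀ y, F₁ y = F₀ (y - β₁)) ∧
      ∀ τ ∈ Set.Ioo (0:ℝ) 1, Qinv F₁ τ - Qinv F₀ τ = β₁ := by
  -- inverse of β₀
  have hsurj : ∀ x : ℝ, ∃ τ, τ ∈ Set.Ioo (0:ℝ) 1 ∧ β₀ τ = x := by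
    intro x
    have hx : x ∈ β₀ '' Set.Ioo 0 1 := by rw [hβ₀onto]; trivial
    obtain ⟨τ, hτ, h⟩ := hx
    exact ⟨τ, hτ, h⟩
  choose g hg1 hg2 using hsurj
  have hgmono : ∀ τ, τ ∈ Set.Ioo (0:ℝ) 1 → ∀ x : ℝ, (τ ≤ g x ↔ β₀ τ ≤ x) := by
    intro τ hτ x
    constructor
    · intro h
      rcases eq_or_lt_of_le h with h' | h'
      · rw [h', hg2]
      · have := hβ₀m hτ (hg1 x) h'
        rw [hg2] at this
        exact this.le
    · intro h
      by_contra hc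
      push_neg at hc
      have := hβ₀m (hg1 x) hτ hc
      rw [hg2] at this
      linarith
  have hF : ∀ y t z, F y t z = g (y - β₁ * z - β₃ * t) := by
    intro y t z
    have h := hFinv _ (hg1 (y - β₁ * z - β₃ * t)) t z
    rw [hg2] at h
    have he : y - β₁ * z - β₃ * t + β₁ * z + β₃ * t = y := by ring
    rwa [he] at h
  have part1 : ∀ y, F₁ y = F₀ (y - β₁) := by
    intro y
    rw [hF₁, hF₀]
    refine integral_congr_ae (Filter.Eventually.of_forall fun ω => ?_)
    show F y (T ω) 1 = F (y - β₁) (T ω) 0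
    rw [hF, hF]
    congr 1
    ring
  refine ⟨part1, ?_⟩
  intro τ hτ
  obtain ⟨hτ0, hτ1⟩ := hτ
  -- bound on β₃ * t for t ∈ (0,1)
  have hbt : ∀ t, t ∈ Set.Ioo (0:ℝ) 1 → β₃ * t ≤ |β₃| ∧ -|β₃| ≤ β₃ * t := by
    intro t ⟨ht0, ht1⟩
    rcases abs_cases β₃ with ⟨h1, h2⟩ | ⟨h1, h2⟩ <;> constructor <;> nlinarith
  -- S₀ is nonempty
  set τ' : ℝ := (τ + 1) / 2 with hτ'
  have hτ'mem : τ' ∈ Set.Ioo (0:ℝ) 1 := ⟨by simp [hτ']; linarith, by simp [hτ']; linarith⟩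
  have hττ' : τ < τ' := by simp [hτ']; linarith
  have hne : (β₀ τ' + |β₃|) ∈ {y : ℝ | τ ≤ F₀ y} := by
    have hlow : ∀ ω, τ' ≤ F (β₀ τ' + |β₃|) (T ω) 0 := by
      intro ω
      rw [hF]
      rw [hgmono τ' hτ'mem]
      have := (hbt (T ω) (hT ω)).1
      simp only [mul_zero]
      linarith
    have hint := integral_mono (integrable_const τ') (hFint (β₀ τ' + |β₃|) 0) hlow
    rw [integral_const] at hint
    simp at hint
    simp only [Set.mem_setOf_eq, hF₀]
    linarith
  -- S₀ is bounded below
  set τ'' : ℝ := τ / 2 with hτ''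
  have hτ''mem : τ'' ∈ Set.Ioo (0:ℝ) 1 := ⟨by simp [hτ'']; linarith, by simp [hτ'']; linarith⟩
  have hbdd : ∀ y ∈ {y : ℝ | τ ≤ F₀ y}, β₀ τ'' - |β₃| ≤ y := by
    intro y hy
    by_contra hc
    push_neg at hc
    have hup : ∀ ω, F y (T ω) 0 ≤ τ'' := by
      intro ω
      rw [hF]
      by_contra hcc
      push_neg at hcc
      rw [show τ'' = τ'' from rfl] at hcc
      have := (hgmono τ'' hτ''mem (y - β₁ * 0 - β₃ * T ω)).1 hcc.le
      have hb := (hbt (T ω) (hT ω)).2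
      simp only [mul_zero] at this
      linarith
    have hint := integral_mono (hFint y 0) (integrable_const τ'') hup
    rw [integral_const] at hint
    simp at hint
    simp only [Set.mem_setOf_eq, hF₀] at hy
    linarith
  have hS₀ne : ({y : ℝ | τ ≤ F₀ y}).Nonempty := ⟨_, hne⟩
  have hS₀bdd : BddBelow {y : ℝ | τ ≤ F₀ y} := ⟨β₀ τ'' - |β₃|, hbdd⟩
  -- S₁ = S₀ + β₁
  have hmem : ∀ y : ℝ, y ∈ {y : ℝ | τ ≤ F₁ y} ↔ (y - β₁) ∈ {y : ℝ | τ ≤ F₀ y} := by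
    intro y
    simp only [Set.mem_setOf_eq, part1 y]
  have hS₁ne : ({y : ℝ | τ ≤ F₁ y}).Nonempty := by
    obtain ⟨y₀, hy₀⟩ := hS₀ne
    exact ⟨y₀ + β₁, (hmem _).2 (by simpa using hy₀)⟩
  have hS₁bdd : BddBelow {y : ℝ | τ ≤ F₁ y} := by
    refine ⟨β₀ τ'' - |β₃| + β₁, fun y hy => ?_⟩
    have := hbdd _ ((hmem y).1 hy)
    linarith
  have key : Qinv F₁ τ = Qinv F₀ τ + β₁ := by
    unfold Qinv
    apply le_antisymm
    · have h1 : sInf {y : ℝ | τ ≤ F₁ y} - β₁ ≤ sInf {y : ℝ | τ ≤ F₀ y} := by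
        apply le_csInf hS₀ne
        intro y hy
        have : y + β₁ ∈ {y : ℝ | τ ≤ F₁ y} := (hmem _).2 (by simpa using hy)
        have := csInf_le hS₁bdd this
        linarith
      linarith
    · apply le_csInf hS₁ne
      intro y hy
      have := csInf_le hS₀bdd ((hmem y).1 hy)
      linarith
  rw [key]
  ring
end
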